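/- Let A be a CDGA over ℚ, Q an A-dgmodule, and f: Q → A a morphism of A-dgmodules that is balanced, i.e. f(x)·y = x·f(y) for all x, y ∈ Q. Then the mapping cone C(f) = A ⊕_f sQ, equipped with the semi-trivial graded-commutative product, is a CDGA; in particular its differential δ(a, sq) = (d_A(a) + f(q), −s d_Q(q)) satisfies the Leibniz rule with respect to this product. -/

import Mathlib

/-!
Common framework: commutative differential graded algebras (CDGAs) over `ℚ`,
differential graded modules, linear duals (represented via perfect pairings),
mapping cones with their semi-trivial multiplication, Poincaré duality CDGAs,
orientations, orphans, and Sullivan extensions.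

A CDGA over `ℚ` is presented as a (possibly non-commutative) ring `A` which is a
`ℚ`-algebra, together with an internal `ℕ`-grading by `ℚ`-subspaces for which
`A` is the internal direct sum of the pieces, such that the product is graded
(with graded commutativity `a·b = (-1)^{|a||b|} b·a`), and a degree `+1`
`ℚ`-linear differential squaring to zero and satisfying the Leibniz rule.
-/

noncomputable section

structure CDGAStruct (A : Type) [Ring A] [Algebra ℚ A] : Type where
  gr : ℕ → Submodule ℚ A
  internal : DirectSum.IsInternal gr
  one_mem : (1 : A) ∈ gr 0
  mul_mem : ∀ {i j : ℕ} {a b : A}, a ∈ gr i → b ∈ gr j → a * b ∈ gr (i + j)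
  gcomm : ∀ {i j : ℕ} {a b : A}, a ∈ gr i → b ∈ gr j →
    a * b = ((-1 : ℚ) ^ (i * j)) • (b * a)
  d : A →ₗ[ℚ] A
  d_mem : ∀ {i : ℕ} {a : A}, a ∈ gr i → d a ∈ gr (i + 1)
  d_sq : ∀ a : A, d (d a) = 0
  leibniz : ∀ {i : ℕ} (a b : A), a ∈ gr i →
    d (a * b) = d a * b + ((-1 : ℚ) ^ i) • (a * d b)

namespace CDGAStruct

variable {A : Type} [Ring A] [Algebra ℚ A]

/-- The grading of a CDGA extended to `ℤ` (zero in negative degrees). -/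
def grZ (SA : CDGAStruct A) : ℤ → Submodule ℚ A :=
  fun j => if 0 ≤ j then SA.gr j.toNat else ⊥

/-- A CDGA is connected if `A⁰ = ℚ·1 ≅ ℚ`. -/
def Connected (SA : CDGAStruct A) : Prop :=
  ∀ a ∈ SA.gr 0, ∃! q : ℚ, a = q • (1 : A)

/-- A CDGA is of finite type if each graded piece is finite dimensional. -/
def FiniteType (SA : CDGAStruct A) : Prop :=
  ∀ i : ℕ, FiniteDimensional ℚ (SA.gr i)

end CDGAStruct

/-- A morphism of CDGAs: a `ℚ`-linear map which is unital, multiplicative,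
preserves the gradings and commutes with the differentials. -/
def IsCDGAHom {A B : Type} [Ring A] [Algebra ℚ A] [Ring B] [Algebra ℚ B]
    (SA : CDGAStruct A) (SB : CDGAStruct B) (f : A →ₗ[ℚ] B) : Prop :=
  f 1 = 1 ∧ (∀ a a' : A, f (a * a') = f a * f a') ∧
    (∀ i : ℕ, ∀ a ∈ SA.gr i, f a ∈ SB.gr i) ∧ ∀ a, f (SA.d a) = SB.d (f a)

/-- A differential graded module (`ℤ`-graded) over the CDGA `(A, SA)`. -/
structure DGModStruct {A : Type} [Ring A] [Algebra ℚ A] (SA : CDGAStruct A)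
    (M : Type) [AddCommGroup M] [Module ℚ M] : Type where
  gr : ℤ → Submodule ℚ M
  internal : DirectSum.IsInternal gr
  smul : A →ₗ[ℚ] M →ₗ[ℚ] M
  one_smul : ∀ m : M, smul 1 m = m
  mul_smul : ∀ (a b : A) (m : M), smul (a * b) m = smul a (smul b m)
  smul_mem : ∀ {i : ℕ} {j : ℤ} {a : A} {m : M},
    a ∈ SA.gr i → m ∈ gr j → smul a m ∈ gr (i + j)
  d : M →ₗ[ℚ] M
  d_mem : ∀ {j : ℤ} {m : M}, m ∈ gr j → d m ∈ gr (j + 1)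
  d_sq : ∀ m : M, d (d m) = 0
  leibniz : ∀ {i : ℕ} (a : A) (m : M), a ∈ SA.gr i →
    d (smul a m) = smul (SA.d a) m + ((-1 : ℚ) ^ i) • smul a (d m)

/-- `SM` is the tautological dg-module structure of a CDGA over itself. -/
def IsSelfMod {A : Type} [Ring A] [Algebra ℚ A] (SA : CDGAStruct A)
    (SM : DGModStruct SA A) : Prop :=
  (∀ j : ℤ, SM.gr j = SA.grZ j) ∧ (∀ a b : A, SM.smul a b = a * b) ∧
    ∀ a : A, SM.d a = SA.d a

/-- `SMA` is the `A`-dg-module structure induced from the `B`-dg-module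
structure `SMB` by restriction along the CDGA morphism `φ : A → B`. -/
def IsModViaHom {A B : Type} [Ring A] [Algebra ℚ A] [Ring B] [Algebra ℚ B]
    (SA : CDGAStruct A) (SB : CDGAStruct B) (φ : A →ₗ[ℚ] B)
    {M : Type} [AddCommGroup M] [Module ℚ M]
    (SMB : DGModStruct SB M) (SMA : DGModStruct SA M) : Prop :=
  (∀ j : ℤ, SMA.gr j = SMB.gr j) ∧ (∀ (a : A) (m : M), SMA.smul a m = SMB.smul (φ a) m) ∧
    ∀ m : M, SMA.d m = SMB.d m

/-- A (degree `0`) morphism of dg-modules over a fixed CDGA. -/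
def IsDGModHom {A : Type} [Ring A] [Algebra ℚ A] {SA : CDGAStruct A}
    {M N : Type} [AddCommGroup M] [Module ℚ M] [AddCommGroup N] [Module ℚ N]
    (SM : DGModStruct SA M) (SN : DGModStruct SA N) (f : M →ₗ[ℚ] N) : Prop :=
  (∀ j : ℤ, ∀ m ∈ SM.gr j, f m ∈ SN.gr j) ∧
    (∀ (a : A) (m : M), f (SM.smul a m) = SN.smul a (f m)) ∧
    ∀ m : M, f (SM.d m) = SN.d (f m)

/-- A (degree `0`) morphism of `A`-dg-modules with target the CDGA `A` itself. -/
def IsDGHomToAlg {A : Type} [Ring A] [Algebra ℚ A] (SA : CDGAStruct A)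
    {M : Type} [AddCommGroup M] [Module ℚ M]
    (SM : DGModStruct SA M) (f : M →ₗ[ℚ] A) : Prop :=
  (∀ j : ℤ, ∀ m ∈ SM.gr j, f m ∈ SA.grZ j) ∧
    (∀ (a : A) (m : M), f (SM.smul a m) = a * f m) ∧
    ∀ m : M, f (SM.d m) = SA.d (f m)

/-- An `A`-dg-module morphism `f : M → A` is balanced when `f(x)·y = x·f(y)`
for all `x, y ∈ M`; here `x·f(y) = (-1)^{|x||f(y)|} f(y)·x` by the usual Koszul
sign rule, and `|f(y)| = |y|` since `f` has degree `0`. -/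
def IsBalanced {A : Type} [Ring A] [Algebra ℚ A] (SA : CDGAStruct A)
    {M : Type} [AddCommGroup M] [Module ℚ M]
    (SM : DGModStruct SA M) (f : M →ₗ[ℚ] A) : Prop :=
  ∀ (i j : ℤ) (x y : M), x ∈ SM.gr i → y ∈ SM.gr j →
    SM.smul (f x) y = ((-1 : ℚ) ^ (i * j)) • SM.smul (f y) x

/-- `SD` realizes the shifted linear dual `s^{-n}#M` of the `A`-dg-module `M`:
the structure carries a pairing `⟨-,-⟩ : D ⊗ M → ℚ` which vanishes except
between degrees `p` and `n - p`, is perfect in each degree, and satisfies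
`⟨d f, x⟩ = -(-1)^{|f|} ⟨f, d x⟩` and `⟨a·f, x⟩ = (-1)^{|a||f|} ⟨f, a·x⟩`
(the standard dual dg-module structure `(a·f)(x) = (-1)^{|a||f|} f(a·x)` with
the dual differential). -/
structure DualRep {A : Type} [Ring A] [Algebra ℚ A] (SA : CDGAStruct A)
    {M : Type} [AddCommGroup M] [Module ℚ M] (SM : DGModStruct SA M) (n : ℤ)
    {D : Type} [AddCommGroup D] [Module ℚ D] (SD : DGModStruct SA D) : Type where
  pair : D →ₗ[ℚ] M →ₗ[ℚ] ℚ
  pair_deg : ∀ {p q : ℤ} {f : D} {x : M}, f ∈ SD.gr p → x ∈ SM.gr q →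
    p + q ≠ n → pair f x = 0
  nondeg : ∀ {p : ℤ} (f : D), f ∈ SD.gr p → (∀ x ∈ SM.gr (n - p), pair f x = 0) → f = 0
  surj : ∀ (p : ℤ) (φ : M →ₗ[ℚ] ℚ), ∃ f ∈ SD.gr p, ∀ x ∈ SM.gr (n - p), pair f x = φ x
  d_pair : ∀ {p : ℤ} (f : D) (x : M), f ∈ SD.gr p →
    pair (SD.d f) x = -(((-1 : ℚ) ^ p) * pair f (SM.d x))
  smul_pair : ∀ {i : ℕ} {p : ℤ} (a : A) (f : D) (x : M), a ∈ SA.gr i → f ∈ SD.gr p →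
    pair (SD.smul a f) x = ((-1 : ℚ) ^ ((i : ℤ) * p)) * pair f (SM.smul a x)

/-- A bundled dg-module over the CDGA `(A, SA)`. -/
structure DGMod {A : Type} [Ring A] [Algebra ℚ A] (SA : CDGAStruct A) : Type 1 where
  carrier : Type
  [acg : AddCommGroup carrier]
  [mod : Module ℚ carrier]
  str : DGModStruct SA carrier

attribute [instance] DGMod.acg DGMod.mod

/-- `SA` is a Poincaré duality CDGA in dimension `n`: it is connected, of finite
type, and there is an isomorphism of `A`-dg-modules `θ : A ≅ s^{-n}#A`. -/
def IsPDCDGA {A : Type} [Ring A] [Algebra ℚ A] (SA : CDGAStruct A) (n : ℤ) : Prop :=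
  SA.Connected ∧ SA.FiniteType ∧
    ∃ SAm : DGModStruct SA A, IsSelfMod SA SAm ∧
      ∃ (DM : DGMod SA) (_ : DualRep SA SAm n DM.str) (θ : A →ₗ[ℚ] DM.carrier),
        IsDGModHom SAm DM.str θ ∧ Function.Bijective θ

section Cohomology

variable {M N : Type} [AddCommGroup M] [Module ℚ M] [AddCommGroup N] [Module ℚ N]

def IsCocycle (gr : ℤ → Submodule ℚ M) (d : M →ₗ[ℚ] M) (j : ℤ) (x : M) : Prop :=
  x ∈ gr j ∧ d x = 0

def IsCoboundary (gr : ℤ → Submodule ℚ M) (d : M →ₗ[ℚ] M) (j : ℤ) (x : M) : Prop :=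
  ∃ y ∈ gr (j - 1), d y = x

/-- `H^j` vanishes: every cocycle of degree `j` is a coboundary. -/
def CohVanishAt (gr : ℤ → Submodule ℚ M) (d : M →ₗ[ℚ] M) (j : ℤ) : Prop :=
  ∀ x, IsCocycle gr d j x → IsCoboundary gr d j x

/-- The chain map `f` induces an isomorphism `H^j(M) → H^j(N)` (surjectivity
and injectivity on cohomology classes in degree `j`). -/
def CohomIsoAt (grM : ℤ → Submodule ℚ M) (dM : M →ₗ[ℚ] M)
    (grN : ℤ → Submodule ℚ N) (dN : N →ₗ[ℚ] N) (f : M →ₗ[ℚ] N) (j : ℤ) : Prop :=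
  (∀ y, IsCocycle grN dN j y →
    ∃ x, IsCocycle grM dM j x ∧ IsCoboundary grN dN j (f x - y)) ∧
  ∀ x, IsCocycle grM dM j x → IsCoboundary grN dN j (f x) → IsCoboundary grM dM j x

def IsQuasiIsoGr (grM : ℤ → Submodule ℚ M) (dM : M →ₗ[ℚ] M)
    (grN : ℤ → Submodule ℚ N) (dN : N →ₗ[ℚ] N) (f : M →ₗ[ℚ] N) : Prop :=
  ∀ j : ℤ, CohomIsoAt grM dM grN dN f j

/-- The degree-`j` cohomology of a graded cochain complex, as a `ℚ`-module. -/
abbrev cohomologyAt (gr : ℤ → Submodule ℚ M) (d : M →ₗ[ℚ] M) (j : ℤ) : Type :=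
  ↥(gr j ⊓ LinearMap.ker d) ⧸
    Submodule.comap (gr j ⊓ LinearMap.ker d).subtype (LinearMap.range d)

end Cohomology

/-- A quasi-isomorphism of CDGAs (on underlying linear maps). -/
def IsQuasiIsoCDGA {A B : Type} [Ring A] [Algebra ℚ A] [Ring B] [Algebra ℚ B]
    (SA : CDGAStruct A) (SB : CDGAStruct B) (f : A →ₗ[ℚ] B) : Prop :=
  IsQuasiIsoGr SA.grZ SA.d SB.grZ SB.d f

/-- `H(A)` is a Poincaré duality algebra in dimension `n`: `H⁰ = ℚ`,
`H^{>n} = 0`, `dim H^n = 1` and the multiplication pairing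
`H^k ⊗ H^{n-k} → H^n ≅ ℚ` is non-degenerate (expressed elementwise via a
linear functional `ε` representing evaluation against the fundamental class). -/
def CohomologyPD {A : Type} [Ring A] [Algebra ℚ A] (SA : CDGAStruct A) (n : ℕ) : Prop :=
  (∀ a ∈ SA.gr 0, SA.d a = 0 → ∃ q : ℚ, a = q • (1 : A)) ∧
  (∀ j : ℤ, (n : ℤ) < j → CohVanishAt SA.grZ SA.d j) ∧
  ∃ ε : A →ₗ[ℚ] ℚ,
    (∀ i : ℕ, i ≠ n → ∀ a ∈ SA.gr i, ε a = 0) ∧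
    (∀ a : A, ε (SA.d a) = 0) ∧
    (∃ a ∈ SA.gr n, SA.d a = 0 ∧ ε a = 1) ∧
    (∀ a ∈ SA.gr n, SA.d a = 0 → ε a = 0 → IsCoboundary SA.grZ SA.d (n : ℤ) a) ∧
    ∀ i : ℕ, i ≤ n → ∀ a ∈ SA.gr i, SA.d a = 0 →
      ¬ IsCoboundary SA.grZ SA.d (i : ℤ) a →
        ∃ b ∈ SA.gr (n - i), SA.d b = 0 ∧ ε (a * b) ≠ 0

/-- `H(A)` is `1`-connected: `H⁰(A) = ℚ` and `H¹(A) = 0`. -/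
def CohOneConnected {A : Type} [Ring A] [Algebra ℚ A] (SA : CDGAStruct A) : Prop :=
  (∀ a ∈ SA.gr 0, SA.d a = 0 → ∃ q : ℚ, a = q • (1 : A)) ∧
  ∀ a ∈ SA.gr 1, SA.d a = 0 → ∃ b ∈ SA.gr 0, SA.d b = a

section Cone

variable {A : Type} [Ring A] [Algebra ℚ A] {M : Type} [AddCommGroup M] [Module ℚ M]

/-- The grading of the mapping cone `C(f) = A ⊕ sM` of a dg-module morphism
`f : M → A`:  `C(f)^p = A^p ⊕ (sM)^p = A^p ⊕ M^{p+1}`. -/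
def coneGr (SA : CDGAStruct A) (SM : DGModStruct SA M) : ℤ → Submodule ℚ (A × M) :=
  fun p => (SA.grZ p).prod (SM.gr (p + 1))

/-- The differential of the mapping cone `C(f) = A ⊕_f sM`:
`δ(a, sm) = (d a + f m, -s (d m))`. -/
def coneD (SA : CDGAStruct A) (SM : DGModStruct SA M) (f : M →ₗ[ℚ] A) :
    A × M →ₗ[ℚ] A × M :=
  (SA.d ∘ₗ LinearMap.fst ℚ A M + f ∘ₗ LinearMap.snd ℚ A M).prod
    (-(SM.d ∘ₗ LinearMap.snd ℚ A M))

/-- The semi-trivial product on the mapping cone `A ⊕ sM`: it is the unique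
graded-commutative product extending the product of `A` and the `A`-module
structure of `sM` (with the Koszul sign `a·(sm) = (-1)^{|a|} s(a·m)`), and with
`(sm)·(sm') = 0`. -/
def SemiTrivialMul (SA : CDGAStruct A) (SM : DGModStruct SA M)
    (μ : A × M →ₗ[ℚ] A × M →ₗ[ℚ] A × M) : Prop :=
  (∀ a a' : A, μ (a, 0) (a', 0) = (a * a', 0)) ∧
  (∀ (i : ℕ) (a : A) (m : M), a ∈ SA.gr i →
    μ (a, 0) (0, m) = (0, ((-1 : ℚ) ^ i) • SM.smul a m)) ∧
  (∀ (i : ℕ) (j : ℤ) (a : A) (m : M), a ∈ SA.gr i → m ∈ SM.gr j →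
    μ (0, m) (a, 0) = (0, ((-1 : ℚ) ^ (j * (i : ℤ))) • SM.smul a m)) ∧
  ∀ m m' : M, μ (0, m) (0, m') = 0

end Cone

/-- The data `(gr, 1, μ, d)` on `C` is a (`ℤ`-graded) CDGA: internal grading,
unital associative graded-commutative product, degree `+1` differential
squaring to zero and satisfying the Leibniz rule. -/
def IsGCDGA {C : Type} [AddCommGroup C] [Module ℚ C]
    (gr : ℤ → Submodule ℚ C) (one : C) (μ : C →ₗ[ℚ] C →ₗ[ℚ] C) (d : C →ₗ[ℚ] C) : Prop :=
  DirectSum.IsInternal gr ∧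
  one ∈ gr 0 ∧
  (∀ x, μ one x = x) ∧ (∀ x, μ x one = x) ∧
  (∀ x y z : C, μ (μ x y) z = μ x (μ y z)) ∧
  (∀ (i j : ℤ) (x y : C), x ∈ gr i → y ∈ gr j → μ x y ∈ gr (i + j)) ∧
  (∀ (i j : ℤ) (x y : C), x ∈ gr i → y ∈ gr j → μ x y = ((-1 : ℚ) ^ (i * j)) • μ y x) ∧
  (∀ j : ℤ, ∀ x ∈ gr j, d x ∈ gr (j + 1)) ∧
  (∀ x, d (d x) = 0) ∧
  ∀ (i : ℤ) (x y : C), x ∈ gr i → d (μ x y) = μ (d x) y + ((-1 : ℚ) ^ i) • μ x (d y)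

/-- A morphism of (`ℤ`-graded) differential graded algebras presented by
`(grading, unit, product, differential)` data. -/
def IsGradedDGAHom {C D : Type} [AddCommGroup C] [Module ℚ C] [AddCommGroup D] [Module ℚ D]
    (grC : ℤ → Submodule ℚ C) (oneC : C) (μC : C →ₗ[ℚ] C →ₗ[ℚ] C) (dC : C →ₗ[ℚ] C)
    (grD : ℤ → Submodule ℚ D) (oneD : D) (μD : D →ₗ[ℚ] D →ₗ[ℚ] D) (dD : D →ₗ[ℚ] D)
    (g : C →ₗ[ℚ] D) : Prop :=
  g oneC = oneD ∧ (∀ x y : C, g (μC x y) = μD (g x) (g y)) ∧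
    (∀ j : ℤ, ∀ x ∈ grC j, g x ∈ grD j) ∧ ∀ x, g (dC x) = dD (g x)

/-- An orientation in degree `n` of a CDGA: a chain map `ε : A → s^{-n}ℚ`
(i.e., `ε` is supported in degree `n` and kills boundaries) which is surjective
in cohomology. -/
def IsOrientation {A : Type} [Ring A] [Algebra ℚ A] (SA : CDGAStruct A) (n : ℕ)
    (ε : A →ₗ[ℚ] ℚ) : Prop :=
  (∀ i : ℕ, i ≠ n → ∀ a ∈ SA.gr i, ε a = 0) ∧ (∀ a : A, ε (SA.d a) = 0) ∧
    ∃ a ∈ SA.gr n, SA.d a = 0 ∧ ε a ≠ 0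

/-- The orphan ideal `O(A, ε) = {a ∈ A | ∀ b, ε(a·b) = 0}` of an oriented CDGA. -/
def orphans {A : Type} [Ring A] [Algebra ℚ A] (_SA : CDGAStruct A) (ε : A →ₗ[ℚ] ℚ) :
    Submodule ℚ A where
  carrier := { a : A | ∀ b : A, ε (a * b) = 0 }
  add_mem' := by
    intro a a' ha ha'
    intro b
    rw [add_mul, map_add, ha b, ha' b, add_zero]
  zero_mem' := by
    intro b
    rw [zero_mul, map_zero]
  smul_mem' := by
    intro c a ha
    intro b
    rw [smul_mul_assoc, map_smul, ha b, smul_zero]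

/-- The orphan ideal is acyclic: it has vanishing cohomology in all degrees. -/
def OrphansAcyclic {A : Type} [Ring A] [Algebra ℚ A] (SA : CDGAStruct A)
    (ε : A →ₗ[ℚ] ℚ) : Prop :=
  ∀ (j : ℕ) (x : A), x ∈ orphans SA ε → x ∈ SA.gr j → SA.d x = 0 →
    ∃ y ∈ orphans SA ε, y ∈ SA.gr (j - 1) ∧ SA.d y = x

/-- A (relative) Sullivan extension `(A, d) ↪ (Â = A ⊗ ΛV, d̂)`: an injective
CDGA morphism `inc : A → Â` together with a graded subspace `V ⊆ Â` of
generators such that `Â` is the free graded-commutative `A`-algebra on `V`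
(expressed by the universal property), and `V` admits an exhaustive increasing
filtration `F 0 ⊆ F 1 ⊆ ⋯` with `d̂(F (k+1)) ⊆ A ⊗ ΛF k` and `d̂(F 0) ⊆ A`. -/
structure SullivanExtension {A Ahat : Type} [Ring A] [Algebra ℚ A]
    [Ring Ahat] [Algebra ℚ Ahat]
    (SA : CDGAStruct A) (SH : CDGAStruct Ahat) : Type 1 where
  inc : A →ₗ[ℚ] Ahat
  hom : IsCDGAHom SA SH inc
  inj : Function.Injective inc
  V : ℕ → Submodule ℚ Ahat
  V_deg : ∀ i : ℕ, V i ≤ SH.gr i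
  free : ∀ (B : Type) [Ring B] [Algebra ℚ B] (SB : CDGAStruct B) (g : A →ₗ[ℚ] B),
    g 1 = 1 → (∀ a a' : A, g (a * a') = g a * g a') →
    (∀ i : ℕ, ∀ a ∈ SA.gr i, g a ∈ SB.gr i) →
    ∀ h : Ahat →ₗ[ℚ] B, (∀ i : ℕ, ∀ v ∈ V i, h v ∈ SB.gr i) →
    ∃! G : Ahat →ₗ[ℚ] B, G 1 = 1 ∧ (∀ x y : Ahat, G (x * y) = G x * G y) ∧
      (∀ i : ℕ, ∀ x ∈ SH.gr i, G x ∈ SB.gr i) ∧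
      (∀ a : A, G (inc a) = g a) ∧ ∀ i : ℕ, ∀ v ∈ V i, G v = h v
  filt : ∃ F : ℕ → Submodule ℚ Ahat,
    (∀ k : ℕ, F k ≤ F (k + 1)) ∧ (∀ k : ℕ, F k ≤ ⨆ i, V i) ∧
    ((⨆ i, V i) ≤ ⨆ k, F k) ∧
    (∀ v ∈ F 0, SH.d v ∈ Algebra.adjoin ℚ (Set.range inc)) ∧
    ∀ k : ℕ, ∀ v ∈ F (k + 1),
      SH.d v ∈ Algebra.adjoin ℚ (Set.range inc ∪ (F k : Set Ahat))

/-- A bundled CDGA over `ℚ`. -/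
structure CDGA : Type 1 where
  carrier : Type
  [ring : Ring carrier]
  [alg : Algebra ℚ carrier]
  str : CDGAStruct carrier

attribute [instance] CDGA.ring CDGA.alg

/-- A bundled morphism of CDGAs. -/
structure CDGAMor : Type 1 where
  src : CDGA
  tgt : CDGA
  map : src.carrier →ₗ[ℚ] tgt.carrier
  isHom : IsCDGAHom src.str tgt.str map

/-- One step of weak equivalence between CDGA morphisms: a commutative square
whose horizontal maps are quasi-isomorphisms of CDGAs. -/
def MorWeakEqStep (m m' : CDGAMor) : Prop :=
  ∃ (α : m.src.carrier →ₗ[ℚ] m'.src.carrier) (β : m.tgt.carrier →ₗ[ℚ] m'.tgt.carrier),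
    IsCDGAHom m.src.str m'.src.str α ∧ IsQuasiIsoCDGA m.src.str m'.src.str α ∧
    IsCDGAHom m.tgt.str m'.tgt.str β ∧ IsQuasiIsoCDGA m.tgt.str m'.tgt.str β ∧
    β ∘ₗ m.map = m'.map ∘ₗ α

/-- Two CDGA morphisms are weakly equivalent if they are connected by a finite
zigzag of commutative squares whose horizontal maps are quasi-isomorphisms. -/
def MorWeakEq : CDGAMor → CDGAMor → Prop := Relation.EqvGen MorWeakEqStep

/-- Two CDGAs are weakly equivalent if they are connected by a finite zigzag of
quasi-isomorphisms of CDGAs. -/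
def CDGAWeakEq : CDGA → CDGA → Prop :=
  Relation.EqvGen fun X Y =>
    ∃ f : X.carrier →ₗ[ℚ] Y.carrier, IsCDGAHom X.str Y.str f ∧ IsQuasiIsoCDGA X.str Y.str f

end


/-!
On homogeneous elements `x = (a, m) ∈ C(f)^p`, `y = (b, n) ∈ C(f)^q` the semi-trivial product is
`x·y = (a b, (-1)^p a·n + (-1)^{(p+1) q} b·m)`. Every element of the cone is a sum of homogeneous
ones and all CDGA axioms are additive in each variable, so each axiom reduces to an identity
between such expressions, checked up to signs that depend only on the parities of the degrees.
In the Leibniz rule the terms `f(m)·n` and `f(n)·m` do not cancel against anything coming from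
the Leibniz rules of `A` and `M`: they cancel against each other precisely because `f` is
balanced, while `δ² = 0` because `f` commutes with the differentials.
-/

section InternalGrading

open DirectSum

variable {ι R M N : Type*} [Ring R] [AddCommGroup M] [Module R M]
  [AddCommGroup N] [Module R N]

theorem iSupIndep.submodule_prod {U : ι → Submodule R M} {V : ι → Submodule R N}
    (hU : iSupIndep U) (hV : iSupIndep V) : iSupIndep fun i => (U i).prod (V i) := by
  refine iSupIndep_def.mpr fun i => ?_
  have hle : (⨆ (j) (_ : j ≠ i), (U j).prod (V j)) ≤
      (⨆ (j) (_ : j ≠ i), U j).prod (⨆ (j) (_ : j ≠ i), V j) :=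
    iSup₂_le fun j hj => Submodule.prod_mono (le_iSup₂ (f := fun j (_ : j ≠ i) => U j) j hj)
      (le_iSup₂ (f := fun j (_ : j ≠ i) => V j) j hj)
  refine Disjoint.mono_right hle (Submodule.disjoint_def.mpr fun x hx hx' => ?_)
  rw [Submodule.mem_prod] at hx hx'
  exact Prod.ext (Submodule.disjoint_def.mp (iSupIndep_def.mp hU i) _ hx.1 hx'.1)
    (Submodule.disjoint_def.mp (iSupIndep_def.mp hV i) _ hx.2 hx'.2)

theorem Submodule.iSup_prod (U : ι → Submodule R M) (V : ι → Submodule R N) :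
    ⨆ i, (U i).prod (V i) = (⨆ i, U i).prod (⨆ i, V i) := by
  simp only [LinearMap.prod_eq_sup_map, iSup_sup_eq, Submodule.map_iSup]

theorem DirectSum.IsInternal.submodule_prod [DecidableEq ι] {U : ι → Submodule R M}
    {V : ι → Submodule R N} (hU : IsInternal U) (hV : IsInternal V) :
    IsInternal fun i => (U i).prod (V i) := by
  rw [isInternal_submodule_iff_iSupIndep_and_iSup_eq_top] at *
  refine ⟨hU.1.submodule_prod hV.1, ?_⟩
  rw [Submodule.iSup_prod, hU.2, hV.2, Submodule.prod_top]

theorem DirectSum.IsInternal.comp_equiv [DecidableEq ι] {κ : Type*} [DecidableEq κ]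
    {U : ι → Submodule R M} (hU : IsInternal U) (e : κ ≃ ι) : IsInternal (U ∘ e) := by
  rw [isInternal_submodule_iff_iSupIndep_and_iSup_eq_top] at *
  exact ⟨hU.1.comp e.injective, (e.iSup_comp (g := U)).trans hU.2⟩

@[elab_as_elim]
theorem DirectSum.IsInternal.induction_on [DecidableEq ι] {U : ι → Submodule R M}
    (hU : IsInternal U) {P : M → Prop} (x : M) (zero : P 0)
    (add : ∀ x y, P x → P y → P (x + y))
    (mem : ∀ i, ∀ x ∈ U i, P x) : P x :=
  Submodule.iSup_induction U (motive := P) (hU.submodule_iSup_eq_top ▸ Submodule.mem_top)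
    mem zero add

end InternalGrading

namespace CDGAStruct

variable {A : Type} [Ring A] [Algebra ℚ A] (SA : CDGAStruct A)

@[simp]
theorem grZ_natCast (n : ℕ) : SA.grZ n = SA.gr n := by
  simp [grZ]

theorem grZ_of_neg {p : ℤ} (hp : p < 0) : SA.grZ p = ⊥ := by
  simp [grZ, hp]

variable {SA}

theorem eq_zero_or_exists_of_mem_grZ {p : ℤ} {a : A} (ha : a ∈ SA.grZ p) :
    a = 0 ∨ ∃ n : ℕ, p = n ∧ a ∈ SA.gr n := by
  rcases lt_or_ge p 0 with hp | hp
  · rw [SA.grZ_of_neg hp] at ha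
    exact Or.inl ha
  · lift p to ℕ using hp
    exact Or.inr ⟨p, rfl, by simpa using ha⟩

theorem isInternal_grZ : DirectSum.IsInternal SA.grZ := by
  have hA := (DirectSum.isInternal_submodule_iff_iSupIndep_and_iSup_eq_top _).mp SA.internal
  refine (DirectSum.isInternal_submodule_iff_iSupIndep_and_iSup_eq_top _).mpr ⟨?_, ?_⟩
  · refine iSupIndep_def.mpr fun p => ?_
    rcases lt_or_ge p 0 with hp | hp
    · simp [SA.grZ_of_neg hp]
    lift p to ℕ using hp
    refine (iSupIndep_def.mp hA.1 p).mono (by simp) (iSup₂_le fun q hq => ?_)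
    rcases lt_or_ge q 0 with hq0 | hq0
    · simp [SA.grZ_of_neg hq0]
    lift q to ℕ using hq0
    exact (SA.grZ_natCast q).le.trans (le_iSup₂ (f := fun n (_ : n ≠ p) => SA.gr n) q
      (by exact_mod_cast hq))
  · refine eq_top_iff.mpr (hA.2 ▸ iSup_le fun n => ?_)
    exact (SA.grZ_natCast n).ge.trans (le_iSup SA.grZ n)

theorem one_mem_grZ : (1 : A) ∈ SA.grZ 0 := by
  simpa [grZ] using SA.one_mem

theorem mul_mem_grZ {p q : ℤ} {a b : A} (ha : a ∈ SA.grZ p) (hb : b ∈ SA.grZ q) :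
    a * b ∈ SA.grZ (p + q) := by
  rcases eq_zero_or_exists_of_mem_grZ ha with rfl | ⟨i, rfl, ha⟩
  · simp
  rcases eq_zero_or_exists_of_mem_grZ hb with rfl | ⟨j, rfl, hb⟩
  · simp
  exact_mod_cast SA.mul_mem ha hb

theorem gcomm_grZ {p q : ℤ} {a b : A} (ha : a ∈ SA.grZ p) (hb : b ∈ SA.grZ q) :
    a * b = ((-1 : ℚ) ^ (p * q)) • (b * a) := by
  rcases eq_zero_or_exists_of_mem_grZ ha with rfl | ⟨i, rfl, ha⟩
  · simp
  rcases eq_zero_or_exists_of_mem_grZ hb with rfl | ⟨j, rfl, hb⟩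
  · simp
  exact_mod_cast SA.gcomm ha hb

theorem d_mem_grZ {p : ℤ} {a : A} (ha : a ∈ SA.grZ p) : SA.d a ∈ SA.grZ (p + 1) := by
  rcases eq_zero_or_exists_of_mem_grZ ha with rfl | ⟨i, rfl, ha⟩
  · simp
  exact_mod_cast SA.d_mem ha

theorem leibniz_grZ {p : ℤ} {a : A} (b : A) (ha : a ∈ SA.grZ p) :
    SA.d (a * b) = SA.d a * b + ((-1 : ℚ) ^ p) • (a * SA.d b) := by
  rcases eq_zero_or_exists_of_mem_grZ ha with rfl | ⟨i, rfl, ha⟩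
  · simp
  exact_mod_cast SA.leibniz a b ha

end CDGAStruct

namespace DGModStruct

variable {A M : Type} [Ring A] [Algebra ℚ A] [AddCommGroup M] [Module ℚ M]
  {SA : CDGAStruct A} (SM : DGModStruct SA M)

theorem smul_mem_grZ {p q : ℤ} {a : A} {m : M} (ha : a ∈ SA.grZ p) (hm : m ∈ SM.gr q) :
    SM.smul a m ∈ SM.gr (p + q) := by
  rcases CDGAStruct.eq_zero_or_exists_of_mem_grZ ha with rfl | ⟨i, rfl, ha⟩
  · simp
  exact SM.smul_mem ha hm

theorem leibniz_grZ {p : ℤ} {a : A} (m : M) (ha : a ∈ SA.grZ p) :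
    SM.d (SM.smul a m) = SM.smul (SA.d a) m + ((-1 : ℚ) ^ p) • SM.smul a (SM.d m) := by
  rcases CDGAStruct.eq_zero_or_exists_of_mem_grZ ha with rfl | ⟨i, rfl, ha⟩
  · simp
  exact_mod_cast SM.leibniz a m ha

end DGModStruct

section Cone

open DirectSum

variable {A M : Type} [Ring A] [Algebra ℚ A] [AddCommGroup M] [Module ℚ M]
  {SA : CDGAStruct A} {SM : DGModStruct SA M}

theorem mem_coneGr {p : ℤ} {x : A × M} :
    x ∈ coneGr SA SM p ↔ x.1 ∈ SA.grZ p ∧ x.2 ∈ SM.gr (p + 1) :=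
  Submodule.mem_prod

theorem isInternal_coneGr (SA : CDGAStruct A) (SM : DGModStruct SA M) :
    IsInternal (coneGr SA SM) :=
  SA.isInternal_grZ.submodule_prod (SM.internal.comp_equiv (Equiv.addRight 1))

@[simp]
theorem coneD_apply (f : M →ₗ[ℚ] A) (x : A × M) :
    coneD SA SM f x = (SA.d x.1 + f x.2, -SM.d x.2) :=
  rfl

variable {f : M →ₗ[ℚ] A}

theorem coneD_mem_coneGr (hf : IsDGHomToAlg SA SM f) {p : ℤ} {x : A × M}
    (hx : x ∈ coneGr SA SM p) : coneD SA SM f x ∈ coneGr SA SM (p + 1) := by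
  rw [mem_coneGr] at hx ⊢
  exact ⟨add_mem (CDGAStruct.d_mem_grZ hx.1) (hf.1 _ _ hx.2), neg_mem (SM.d_mem hx.2)⟩

theorem coneD_coneD (hf : IsDGHomToAlg SA SM f) (x : A × M) :
    coneD SA SM f (coneD SA SM f x) = 0 := by
  simp [SA.d_sq, SM.d_sq, hf.2.2]

namespace SemiTrivialMul

variable {μ : A × M →ₗ[ℚ] A × M →ₗ[ℚ] A × M}

theorem apply_inl_inr (hμ : SemiTrivialMul SA SM μ) {p : ℤ} {a : A} (ha : a ∈ SA.grZ p)
    (m : M) : μ (a, 0) (0, m) = (0, ((-1 : ℚ) ^ p) • SM.smul a m) := by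
  rcases CDGAStruct.eq_zero_or_exists_of_mem_grZ ha with rfl | ⟨i, rfl, ha⟩
  · simp [← Prod.zero_eq_mk]
  · simpa using hμ.2.1 i a m ha

theorem apply_inr_inl (hμ : SemiTrivialMul SA SM μ) {p q : ℤ} {m : M} {a : A}
    (hm : m ∈ SM.gr p) (ha : a ∈ SA.grZ q) :
    μ (0, m) (a, 0) = (0, ((-1 : ℚ) ^ (p * q)) • SM.smul a m) := by
  rcases CDGAStruct.eq_zero_or_exists_of_mem_grZ ha with rfl | ⟨i, rfl, ha⟩
  · simp [← Prod.zero_eq_mk]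
  · exact hμ.2.2.1 i p a m ha hm

theorem apply_of_mem (hμ : SemiTrivialMul SA SM μ) {p q : ℤ} {x y : A × M}
    (hx : x ∈ coneGr SA SM p) (hy : y ∈ coneGr SA SM q) :
    μ x y = (x.1 * y.1, ((-1 : ℚ) ^ p) • SM.smul x.1 y.2
      + ((-1 : ℚ) ^ ((p + 1) * q)) • SM.smul y.1 x.2) := by
  rw [mem_coneGr] at hx hy
  obtain ⟨a, m⟩ := x
  obtain ⟨b, n⟩ := y
  have hsplit : ∀ (c : A) (k : M), ((c, k) : A × M) = (c, 0) + (0, k) := by simp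
  rw [hsplit a m, hsplit b n]
  simp only [map_add, LinearMap.add_apply, hμ.1, hμ.apply_inl_inr hx.1,
    hμ.apply_inr_inl hx.2 hy.1, hμ.2.2.2]
  simp [add_comm]

theorem mul_mem_coneGr (hμ : SemiTrivialMul SA SM μ) {p q : ℤ} {x y : A × M}
    (hx : x ∈ coneGr SA SM p) (hy : y ∈ coneGr SA SM q) :
    μ x y ∈ coneGr SA SM (p + q) := by
  rw [hμ.apply_of_mem hx hy, mem_coneGr]
  rw [mem_coneGr] at hx hy
  refine ⟨CDGAStruct.mul_mem_grZ hx.1 hy.1, add_mem (Submodule.smul_mem _ _ ?_)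
    (Submodule.smul_mem _ _ ?_)⟩
  · rw [add_assoc]
    exact SM.smul_mem_grZ hx.1 hy.2
  · rw [show p + q + 1 = q + (p + 1) by ring]
    exact SM.smul_mem_grZ hy.1 hx.2

theorem one_mul (hμ : SemiTrivialMul SA SM μ) (x : A × M) : μ (1, 0) x = x := by
  refine (isInternal_coneGr SA SM).induction_on x (map_zero _)
    (fun x y hx hy => by rw [map_add, hx, hy]) fun _ x hx => ?_
  rw [hμ.apply_of_mem (mem_coneGr.mpr ⟨SA.one_mem_grZ, zero_mem _⟩) hx]
  simp [SM.one_smul]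

theorem mul_one (hμ : SemiTrivialMul SA SM μ) (x : A × M) : μ x (1, 0) = x := by
  refine (isInternal_coneGr SA SM).induction_on x (by rw [map_zero, LinearMap.zero_apply])
    (fun x y hx hy => by rw [map_add, LinearMap.add_apply, hx, hy]) fun _ x hx => ?_
  rw [hμ.apply_of_mem hx (mem_coneGr.mpr ⟨SA.one_mem_grZ, zero_mem _⟩)]
  simp [SM.one_smul]

theorem gcomm (hμ : SemiTrivialMul SA SM μ) {p q : ℤ} {x y : A × M}
    (hx : x ∈ coneGr SA SM p) (hy : y ∈ coneGr SA SM q) :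
    μ x y = ((-1 : ℚ) ^ (p * q)) • μ y x := by
  rw [hμ.apply_of_mem hx hy, hμ.apply_of_mem hy hx, Prod.smul_mk, Prod.mk.injEq]
  refine ⟨CDGAStruct.gcomm_grZ (mem_coneGr.mp hx).1 (mem_coneGr.mp hy).1, ?_⟩
  match_scalars <;> by_cases hp : Even p <;> by_cases hq : Even q <;>
    simp [neg_one_zpow_eq_ite, hp, hq, parity_simps, ← Int.not_even_iff_odd]

theorem assoc_of_mem (hμ : SemiTrivialMul SA SM μ) {p q r : ℤ} {x y z : A × M}
    (hx : x ∈ coneGr SA SM p) (hy : y ∈ coneGr SA SM q) (hz : z ∈ coneGr SA SM r) :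
    μ (μ x y) z = μ x (μ y z) := by
  rw [hμ.apply_of_mem (hμ.mul_mem_coneGr hx hy) hz,
    hμ.apply_of_mem hx (hμ.mul_mem_coneGr hy hz), hμ.apply_of_mem hx hy, hμ.apply_of_mem hy hz]
  rw [mem_coneGr] at hx hy hz
  refine Prod.ext (mul_assoc _ _ _) ?_
  have hca : z.1 * x.1 = ((-1 : ℚ) ^ (r * p)) • (x.1 * z.1) := CDGAStruct.gcomm_grZ hz.1 hx.1
  have hcb : z.1 * y.1 = ((-1 : ℚ) ^ (r * q)) • (y.1 * z.1) := CDGAStruct.gcomm_grZ hz.1 hy.1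
  simp only [map_add, map_smul, LinearMap.smul_apply, ← SM.mul_smul, hca, hcb]
  match_scalars <;> by_cases hp : Even p <;> by_cases hq : Even q <;> by_cases hr : Even r <;>
    simp [neg_one_zpow_eq_ite, hp, hq, hr, parity_simps, ← Int.not_even_iff_odd]

theorem assoc (hμ : SemiTrivialMul SA SM μ) (x y z : A × M) :
    μ (μ x y) z = μ x (μ y z) := by
  refine (isInternal_coneGr SA SM).induction_on z (by simp)
    (fun z z' h h' => by simp only [map_add, h, h']) fun _ z hz => ?_
  refine (isInternal_coneGr SA SM).induction_on y (by simp)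
    (fun y y' h h' => by simp only [map_add, LinearMap.add_apply, h, h']) fun _ y hy => ?_
  refine (isInternal_coneGr SA SM).induction_on x (by simp)
    (fun x x' h h' => by simp only [map_add, LinearMap.add_apply, h, h']) fun _ x hx => ?_
  exact hμ.assoc_of_mem hx hy hz

theorem leibniz_of_mem (hμ : SemiTrivialMul SA SM μ) (hf : IsDGHomToAlg SA SM f)
    (hbal : IsBalanced SA SM f) {p q : ℤ} {x y : A × M}
    (hx : x ∈ coneGr SA SM p) (hy : y ∈ coneGr SA SM q) :
    coneD SA SM f (μ x y) =
      μ (coneD SA SM f x) y + ((-1 : ℚ) ^ p) • μ x (coneD SA SM f y) := by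
  rw [hμ.apply_of_mem (coneD_mem_coneGr hf hx) hy, hμ.apply_of_mem hx (coneD_mem_coneGr hf hy),
    hμ.apply_of_mem hx hy]
  rw [mem_coneGr] at hx hy
  have hfm : f x.2 * y.1 = ((-1 : ℚ) ^ ((p + 1) * q)) • (y.1 * f x.2) :=
    CDGAStruct.gcomm_grZ (hf.1 _ _ hx.2) hy.1
  have hbal' : SM.smul (f x.2) y.2 = ((-1 : ℚ) ^ ((p + 1) * (q + 1))) • SM.smul (f y.2) x.2 :=
    hbal _ _ _ _ hx.2 hy.2
  simp only [coneD_apply, Prod.smul_mk, Prod.mk_add_mk, Prod.mk.injEq, map_add, map_smul,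
    map_neg, LinearMap.add_apply, hf.2.1, SA.leibniz_grZ _ hx.1, SM.leibniz_grZ _ hx.1,
    SM.leibniz_grZ _ hy.1, add_mul, mul_add, hfm, hbal']
  constructor
  · module
  · match_scalars <;> by_cases hp : Even p <;> by_cases hq : Even q <;>
      simp [neg_one_zpow_eq_ite, hp, hq, parity_simps, ← Int.not_even_iff_odd]

theorem leibniz (hμ : SemiTrivialMul SA SM μ) (hf : IsDGHomToAlg SA SM f)
    (hbal : IsBalanced SA SM f) {p : ℤ} {x : A × M} (hx : x ∈ coneGr SA SM p) (y : A × M) :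
    coneD SA SM f (μ x y) =
      μ (coneD SA SM f x) y + ((-1 : ℚ) ^ p) • μ x (coneD SA SM f y) := by
  refine (isInternal_coneGr SA SM).induction_on y
    (by simp only [map_zero, smul_zero, add_zero])
    (fun y y' h h' => by simp only [map_add, smul_add, h, h']; abel) fun _ y hy => ?_
  exact hμ.leibniz_of_mem hf hbal hx hy

end SemiTrivialMul

end Cone

/-- Let `A` be a CDGA over `ℚ`, `M` an `A`-dgmodule, and
`f : M → A` a morphism of `A`-dgmodules that is balanced, i.e.
`f(x)·y = x·f(y)` for all `x, y ∈ M`. Then the mapping cone `C(f) = A ⊕_f sM`,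
equipped with the semi-trivial graded-commutative product, is a CDGA; in
particular its differential `δ(a, sm) = (d_A(a) + f(m), -s d_M(m))` satisfies
the Leibniz rule with respect to this product. -/
theorem statement0 {A M : Type} [Ring A] [Algebra ℚ A] [AddCommGroup M] [Module ℚ M]
    (SA : CDGAStruct A) (SM : DGModStruct SA M)
    (f : M →ₗ[ℚ] A) (hf : IsDGHomToAlg SA SM f)
    (hbal : IsBalanced SA SM f)
    (μ : A × M →ₗ[ℚ] A × M →ₗ[ℚ] A × M) (hμ : SemiTrivialMul SA SM μ) :
    IsGCDGA (coneGr SA SM) ((1 : A), (0 : M)) μ (coneD SA SM f) :=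
  ⟨isInternal_coneGr SA SM, mem_coneGr.mpr ⟨SA.one_mem_grZ, zero_mem _⟩, hμ.one_mul,
    hμ.mul_one, hμ.assoc, fun _ _ _ _ => hμ.mul_mem_coneGr, fun _ _ _ _ => hμ.gcomm,
    fun _ _ => coneD_mem_coneGr hf, coneD_coneD hf, fun _ _ y hx => hμ.leibniz hf hbal hx y⟩
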